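/- arXiv:2011.09227 — 4 statements merged into one kernel-verified Lean document; each statement's English description precedes it below -/
import Mathlib

section
/- Let n, k, m be positive integers and let P = (P_{ij}) (1 ≤ i ≤ m, 1 ≤ j ≤ k) be a profile with m rows and entries in {1,…,n} which is weakly column decreasing. Then P is canonical if and only if any two rows of P, regarded as k-element subsets of {1,…,n}, are interlacing. -/
/-!
Everything is read off the counting functions `t ↦ #{a ∈ A | a ≤ t}`. For increasing
sequences, `b i ≤ a (i + d)` for all `i` means exactly that the count of `a` never exceeds the
count of `b` by more than `d`; hence two equal-sized sets interlace iff their counting functions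
differ by `0` or `1` with a fixed sign. Going down the columns of `P` the row counts increase, so
all pairs of rows interlace iff the last row's count never exceeds the first row's by more than
one, and that is the canonical condition `P_{1,j-1} ≤ P_{m,j}`.
-/

open scoped Classical

noncomputable section

namespace GCC

/-- `a₁ < b₁ < a₂ < b₂ < ⋯ < a_r < b_r` for sorted lists `a`, `b` of equal length `r`. -/
def AltChain (a b : List ℕ) : Prop :=
  (∀ i, i < a.length → a.getD i 0 < b.getD i 0) ∧
  (∀ i, i + 1 < a.length → b.getD i 0 < a.getD (i + 1) 0)

/-- Two finite sets of naturals are interlacing, i.e. `r`-interlacing for some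
`r ≥ 0`: the sorted lists of `J1∖J2` and `J2∖J1` have the same length and
alternate (in one of the two possible ways). -/
def Interlacing (J1 J2 : Finset ℕ) : Prop :=
  (J1 \ J2).card = (J2 \ J1).card ∧
  (AltChain ((J1 \ J2).sort (· ≤ ·)) ((J2 \ J1).sort (· ≤ ·)) ∨
   AltChain ((J2 \ J1).sort (· ≤ ·)) ((J1 \ J2).sort (· ≤ ·)))

open Finset Function

def countLe (A : Finset ℕ) (t : ℕ) : ℕ := #{a ∈ A | a ≤ t}

theorem countLe_le_card (A : Finset ℕ) (t : ℕ) : countLe A t ≤ #A :=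
  card_filter_le _ _

theorem countLe_image {r : ℕ} {a : Fin r → ℕ} (ha : Injective a) (t : ℕ) :
    countLe (univ.image a) t = #{i | a i ≤ t} := by
  rw [countLe, filter_image, card_image_of_injective _ ha]

theorem countLe_sdiff_add_countLe_inter (A B : Finset ℕ) (t : ℕ) :
    countLe (A \ B) t + countLe (A ∩ B) t = countLe A t := by
  rw [countLe, countLe, countLe, ← card_union_of_disjoint
    (disjoint_filter_filter (disjoint_sdiff_inter A B)), ← filter_union, sdiff_union_inter]

theorem countLe_add_countLe_sdiff (A B : Finset ℕ) (t : ℕ) :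
    countLe A t + countLe (B \ A) t = countLe B t + countLe (A \ B) t := by
  rw [← countLe_sdiff_add_countLe_inter A B, ← countLe_sdiff_add_countLe_inter B A, inter_comm]
  ring

theorem le_iff_lt_countLe_image {r : ℕ} {a : Fin r → ℕ} (ha : StrictMono a) (i : Fin r)
    (t : ℕ) : a i ≤ t ↔ (i : ℕ) < countLe (univ.image a) t := by
  rw [countLe_image ha.injective]
  constructor
  · intro hi
    calc (i : ℕ) < #(Iic i) := by simp
      _ ≤ #{j | a j ≤ t} := card_le_card fun j hj =>
        mem_filter.2 ⟨mem_univ j, (ha.monotone (mem_Iic.1 hj)).trans hi⟩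
  · intro hi
    by_contra! hti
    have hsub : ({j | a j ≤ t} : Finset (Fin r)) ⊆ Iio i := fun j hj =>
      mem_Iio.2 (ha.lt_iff_lt.1 ((mem_filter.1 hj).2.trans_lt hti))
    have := card_le_card hsub
    simp only [Fin.card_Iio] at this
    omega

theorem shift_le_iff_countLe_le_add {r s d : ℕ} {a : Fin r → ℕ} {b : Fin s → ℕ}
    (ha : StrictMono a) (hb : StrictMono b) (hrs : r ≤ s + d) :
    (∀ (i : Fin s) (j : Fin r), (i : ℕ) + d = j → b i ≤ a j) ↔
      ∀ t, countLe (univ.image a) t ≤ countLe (univ.image b) t + d := by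
  constructor
  · intro h t
    by_contra! hlt
    set c := countLe (univ.image b) t
    have hcr : countLe (univ.image a) t ≤ r :=
      (countLe_le_card _ t).trans (card_image_le.trans (by simp))
    have hbi : b ⟨c, by omega⟩ ≤ t :=
      (h ⟨c, by omega⟩ ⟨c + d, by omega⟩ rfl).trans ((le_iff_lt_countLe_image ha _ t).2 hlt)
    exact lt_irrefl c ((le_iff_lt_countLe_image hb _ t).1 hbi)
  · intro h i j hij
    have hj := (le_iff_lt_countLe_image ha j (a j)).1 le_rfl
    exact (le_iff_lt_countLe_image hb i (a j)).2 (by have := h (a j); omega)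

theorem le_iff_countLe_le {r : ℕ} {a b : Fin r → ℕ} (ha : StrictMono a) (hb : StrictMono b) :
    (∀ i, b i ≤ a i) ↔ ∀ t, countLe (univ.image a) t ≤ countLe (univ.image b) t := by
  simpa [Fin.val_inj] using shift_le_iff_countLe_le_add ha hb (d := 0) le_rfl

theorem sort_getD_eq_orderEmbOfFin (A : Finset ℕ) {r : ℕ} (h : #A = r) {i : ℕ}
    (hi : i < r) :
    (A.sort (· ≤ ·)).getD i 0 = A.orderEmbOfFin h ⟨i, hi⟩ := by
  rw [orderEmbOfFin_apply, List.getD_eq_getElem _ _ (by rwa [length_sort, h]), Fin.getElem_fin]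

theorem altChain_sort_iff {A B : Finset ℕ} (hAB : Disjoint A B) (hcard : #A = #B) :
    AltChain (A.sort (· ≤ ·)) (B.sort (· ≤ ·)) ↔
      ∀ t, countLe B t ≤ countLe A t ∧ countLe A t ≤ countLe B t + 1 := by
  set α := A.orderEmbOfFin rfl
  set β := B.orderEmbOfFin hcard.symm
  have hne (i j : Fin #A) : α i ≠ β j := fun h =>
    disjoint_left.1 hAB (orderEmbOfFin_mem A rfl i) (h ▸ orderEmbOfFin_mem B hcard.symm j)
  have hchain : AltChain (A.sort (· ≤ ·)) (B.sort (· ≤ ·)) ↔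
      (∀ i, α i ≤ β i) ∧ ∀ i j : Fin #A, (i : ℕ) + 1 = j → β i ≤ α j := by
    have hA {i : ℕ} (hi : i < #A) := sort_getD_eq_orderEmbOfFin A rfl hi
    have hB {i : ℕ} (hi : i < #A) := sort_getD_eq_orderEmbOfFin B hcard.symm hi
    simp only [AltChain, length_sort]
    refine and_congr ⟨fun h i => ?_, fun h i hi => ?_⟩
      ⟨fun h i j hij => ?_, fun h i hi => ?_⟩
    · have hi := (h i i.2).le
      rwa [hA i.2, hB i.2] at hi
    · rw [hA hi, hB hi]
      exact (hne _ _).lt_of_le (h _)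
    · obtain ⟨j, hj⟩ := j
      obtain rfl : i + 1 = j := hij
      have hlt := (h i hj).le
      rwa [hA (by omega), hB (by omega)] at hlt
    · rw [hA hi, hB (by omega)]
      exact (hne _ _).symm.lt_of_le (h _ _ rfl)
  rw [hchain, le_iff_countLe_le β.strictMono α.strictMono,
    shift_le_iff_countLe_le_add α.strictMono β.strictMono (Nat.le_succ _),
    image_orderEmbOfFin_univ, image_orderEmbOfFin_univ, forall_and]

theorem interlacing_iff_countLe {J₁ J₂ : Finset ℕ} (hcard : #J₁ = #J₂) :
    Interlacing J₁ J₂ ↔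
      (∀ t, countLe J₂ t ≤ countLe J₁ t ∧ countLe J₁ t ≤ countLe J₂ t + 1) ∨
      (∀ t, countLe J₁ t ≤ countLe J₂ t ∧ countLe J₂ t ≤ countLe J₁ t + 1) := by
  have hsdiff : #(J₁ \ J₂) = #(J₂ \ J₁) := card_sdiff_eq_card_sdiff_iff.2 hcard
  rw [Interlacing, altChain_sort_iff disjoint_sdiff_sdiff hsdiff,
    altChain_sort_iff disjoint_sdiff_sdiff hsdiff.symm, and_iff_right hsdiff]
  refine or_congr (forall_congr' fun t => ?_) (forall_congr' fun t => ?_) <;>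
    have := countLe_add_countLe_sdiff J₁ J₂ t <;> omega

theorem antitone_of_forall_succ_le {α : Type*} [Preorder α] {m : ℕ} {f : Fin m → α}
    (h : ∀ i i' : Fin m, (i : ℕ) + 1 = i' → f i' ≤ f i) : Antitone f := by
  cases m with
  | zero => exact fun i => i.elim0
  | succ m => exact Fin.antitone_iff_succ_le.2 fun i => h _ _ (by simp)

theorem canonical_iff_interlacing (k m : ℕ) (hm : 1 ≤ m)
    (P : Fin m → Fin k → ℕ)
    (hrows : ∀ i, StrictMono (P i))
    (hwcd : ∀ (i i' : Fin m) (j : Fin k), (i : ℕ) + 1 = (i' : ℕ) → P i' j ≤ P i j) :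
    ((∀ j j' : Fin k, (j : ℕ) + 1 = (j' : ℕ) → P ⟨0, by omega⟩ j ≤ P ⟨m - 1, by omega⟩ j') ↔
      ∀ i i' : Fin m, Interlacing (Finset.univ.image (P i)) (Finset.univ.image (P i'))) := by
  set top : Fin m := ⟨0, by omega⟩
  set bot : Fin m := ⟨m - 1, by omega⟩
  have hcard (i : Fin m) : #(univ.image (P i)) = k := by
    rw [card_image_of_injective _ (hrows i).injective, card_univ, Fintype.card_fin]
  have hmono {i i' : Fin m} (h : i ≤ i') (t : ℕ) :
      countLe (univ.image (P i)) t ≤ countLe (univ.image (P i')) t :=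
    (le_iff_countLe_le (hrows i) (hrows i')).1
      (fun j => antitone_of_forall_succ_le (fun i i' => hwcd i i' j) h) t
  have htop (i : Fin m) : top ≤ i := Fin.mk_le_of_le_val (Nat.zero_le _)
  have hbot (i : Fin m) : i ≤ bot := Fin.le_def.2 (by simp [bot]; omega)
  rw [shift_le_iff_countLe_le_add (hrows bot) (hrows top) (Nat.le_succ k)]
  constructor
  · intro h i i'
    rw [interlacing_iff_countLe ((hcard i).trans (hcard i').symm)]
    rcases le_total i i' with hii | hii
    · refine Or.inr fun t => ⟨hmono hii t, ?_⟩
      have := hmono (hbot i') t; have := hmono (htop i) t; have := h t; omega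
    · refine Or.inl fun t => ⟨hmono hii t, ?_⟩
      have := hmono (hbot i) t; have := hmono (htop i') t; have := h t; omega
  · intro h t
    have hbt := hmono (hbot top) t
    rcases (interlacing_iff_countLe ((hcard top).trans (hcard bot).symm)).1 (h top bot)
      with h' | h' <;> have := h' t <;> omega

end GCC
end
end

section
/- Let 1 ≤ k < n, let M be a rank-s Cohen–Macaulay B_{k,n}-module, and let j ∈ {1,…,n}. Then the 1-increase inc_j(M) satisfies the defining relations of CM(B_{k+1,n+1}), i.e. it is a rank-s Cohen–Macaulay B_{k+1,n+1}-module, and the 1-co-increase inc^c_j(M) satisfies the defining relations of CM(B_{k,n+1}), i.e. it is a rank-s Cohen–Macaulay B_{k,n+1}-module. -/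
open scoped Classical

noncomputable section

namespace GCC

/-- The base ring `R = ℂ⟦t⟧` of formal power series. -/
abbrev Rser : Type := PowerSeries ℂ

/-- The power series variable `t`. -/
noncomputable def tser : Rser := PowerSeries.X

/-- The cyclic product `X i * X (i-1) * ⋯ * X (i-(n-1))`, i.e.
`X_{i+n} · X_{i+n-1} · ⋯ · X_{i+1}` with indices read modulo `n`. -/
def cycProd {n s : ℕ} (X : ZMod n → Matrix (Fin s) (Fin s) Rser) (i : ZMod n) :
    Matrix (Fin s) (Fin s) Rser :=
  ((List.range n).map fun j => X (i - (j : ZMod n))).prod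

/-- A (maximal) Cohen–Macaulay `B_{k,n}`-module of rank `s`: a family of `s × s`
matrices `X i`, `Y i` over `ℂ⟦t⟧`, indexed by `ℤ/n`, subject to the relations
`X i * Y i = t·Id`, `Y i * X i = t·Id`, and the cyclic relation
`X_{i+n} ⋯ X_{i+1} = t^(n-k)·Id`. -/
structure CMMod (k n s : ℕ) : Type where
  X : ZMod n → Matrix (Fin s) (Fin s) Rser
  Y : ZMod n → Matrix (Fin s) (Fin s) Rser
  hXY : ∀ i, X i * Y i = tser • (1 : Matrix (Fin s) (Fin s) Rser)
  hYX : ∀ i, Y i * X i = tser • (1 : Matrix (Fin s) (Fin s) Rser)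
  hcyc : ∀ i, cycProd X i = (tser ^ (n - k)) • (1 : Matrix (Fin s) (Fin s) Rser)

/-- A morphism of Cohen–Macaulay `B_{k,n}`-modules: a family of matrices
`F i` with `F i * X i = X' i * F (i-1)` and `F (i-1) * Y i = Y' i * F i`. -/
structure CMHom {k n s s' : ℕ} (M : CMMod k n s) (M' : CMMod k n s') : Type where
  F : ZMod n → Matrix (Fin s') (Fin s) Rser
  hX : ∀ i, F i * M.X i = M'.X i * F (i - 1)
  hY : ∀ i, F (i - 1) * M.Y i = M'.Y i * F i

/-- `M` is indecomposable: its only idempotent endomorphisms are `0` and the identity. -/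
def Indecomposable {k n s : ℕ} (M : CMMod k n s) : Prop :=
  ∀ f : CMHom M M, (∀ i, f.F i * f.F i = f.F i) → (∀ i, f.F i = 0) ∨ (∀ i, f.F i = 1)

/-- A short exact sequence `0 → A → E → B → 0` in `CM(B_{k,n})`: a pair of
morphisms that is exact at each index `i` as a sequence of `R`-modules. -/
structure CMses {k n sA sE sB : ℕ} (A : CMMod k n sA) (E : CMMod k n sE)
    (B : CMMod k n sB) : Type where
  emb : CMHom A E
  quo : CMHom E B
  inj : ∀ i, Function.Injective ((emb.F i).mulVecLin)
  exactness : ∀ i, LinearMap.range ((emb.F i).mulVecLin) = LinearMap.ker ((quo.F i).mulVecLin)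
  surj : ∀ i, Function.Surjective ((quo.F i).mulVecLin)

/-- A short exact sequence splits if some morphism `ρ : E → A` satisfies `ρ ∘ ι = id`. -/
def CMses.Splits {k n sA sE sB : ℕ} {A : CMMod k n sA} {E : CMMod k n sE} {B : CMMod k n sB}
    (S : CMses A E B) : Prop :=
  ∃ ρ : CMHom E A, ∀ i, ρ.F i * S.emb.F i = 1

/-- `M` is rigid: every short exact sequence `0 → M → E → M → 0` splits. -/
def Rigid {k n s : ℕ} (M : CMMod k n s) : Prop :=
  ∀ (sE : ℕ) (E : CMMod k n sE) (S : CMses M E M), S.Splits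

/-- `N` is the rank-1 module `L_I`: `X i = 1`, `Y i = t` for `i ∈ I`, and
`X i = t`, `Y i = 1` for `i ∉ I`. -/
def IsRankOne {k n : ℕ} (I : Finset (ZMod n)) (N : CMMod k n 1) : Prop :=
  (∀ i, N.X i = if i ∈ I then 1 else tser • 1) ∧
  (∀ i, N.Y i = if i ∈ I then tser • 1 else 1)

/-- `M` admits the filtration `L_{I₁} | L_{I₂} | ⋯ | L_{Iₘ}`: there are modules
`M = N₁, N₂, …, Nₘ = L_{Iₘ}` and short exact sequences
`0 → N_{j+1} → N_j → L_{I_j} → 0`. -/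
inductive HasFiltration {k n : ℕ} : {s : ℕ} → CMMod k n s → List (Finset (ZMod n)) → Prop
  | base {I : Finset (ZMod n)} {N : CMMod k n 1} : IsRankOne I N → HasFiltration N [I]
  | step {s s' : ℕ} {N : CMMod k n s} {M : CMMod k n s'} {Q : CMMod k n 1}
      {I : Finset (ZMod n)} {rest : List (Finset (ZMod n))} :
      IsRankOne I Q → HasFiltration N rest → Nonempty (CMses N M Q) →
      HasFiltration M (I :: rest)


/-- The label in `{1,…,n}` of a residue in `ℤ/n`. -/
def labelOfZ (n : ℕ) (z : ZMod n) : ℕ := if z.val = 0 then n else z.val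

/-- Insert an extra matrix `A` after position `j` of the cyclic family `X`:
the new family, indexed by `ℤ/(n+1)`, is `(X_1, …, X_j, A, X_{j+1}, …, X_n)`. -/
def incData {n s : ℕ} (j : ℕ) (X : ZMod n → Matrix (Fin s) (Fin s) Rser)
    (A : Matrix (Fin s) (Fin s) Rser) : ZMod (n + 1) → Matrix (Fin s) (Fin s) Rser :=
  fun i' =>
    if labelOfZ (n + 1) i' ≤ j then X ((labelOfZ (n + 1) i' : ℕ) : ZMod n)
    else if labelOfZ (n + 1) i' = j + 1 then A
    else X (((labelOfZ (n + 1) i' - 1 : ℕ) : ZMod n))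

/-- `M'` is the 1-increase `inc_j(M)`: the X-sequence is
`(X_1,…,X_j, Id, X_{j+1},…,X_n)` and the Y-sequence is
`(Y_1,…,Y_j, t·Id, Y_{j+1},…,Y_n)`. -/
def IsInc {k n s : ℕ} (j : ℕ) (M : CMMod k n s) (M' : CMMod (k + 1) (n + 1) s) : Prop :=
  M'.X = incData j M.X 1 ∧ M'.Y = incData j M.Y (tser • 1)

/-- `M'` is the 1-co-increase `incᶜ_j(M)`: insert `X = t·Id`, `Y = Id` after position `j`. -/
def IsCoInc {k n s : ℕ} (j : ℕ) (M : CMMod k n s) (M' : CMMod k (n + 1) s) : Prop :=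
  M'.X = incData j M.X (tser • 1) ∧ M'.Y = incData j M.Y 1

/-!
Inserting a scalar arrow pair `(c·Id, d·Id)` with `c d = t` keeps the relations `XY = YX = t`
index by index. Since scalars commute with everything, the cyclic product at the base point `0`
of the new family is `c` times the old one: `t^((n+1)-(k+1))` for `c = 1` and `t^((n+1)-k)` for
`c = t`.
Moving the base point one step conjugates the cyclic product by an `X_i`, and `X_i` can be
cancelled on the right because `X_i Y_i = t` with `t` a non-zero-divisor; so a scalar value at
one index propagates to all indices.
-/

lemma tser_ne_zero : tser ≠ 0 := PowerSeries.X_ne_zero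

lemma isRightRegular_of_mul_eq_tser_smul {s : ℕ} {Z W : Matrix (Fin s) (Fin s) Rser}
    (h : Z * W = tser • 1) : IsRightRegular Z := by
  intro A B hAB
  have hW : tser • A = tser • B := by
    simpa only [mul_assoc, h, Matrix.mul_smul, mul_one] using congrArg (· * W) hAB
  exact smul_right_injective _ tser_ne_zero hW

section CycProd

variable {s : ℕ}

-- The binder of `cycProd` elaborates through the coercion `List ℕ → List (ZMod n)`.
lemma cycProd_eq_prod_map {n : ℕ} (X : ZMod n → Matrix (Fin s) (Fin s) Rser) (i : ZMod n) :
    cycProd X i = ((List.range n).map fun l : ℕ => X (i - l)).prod := by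
  rw [cycProd]
  simp only [bind_pure_comp, List.map_eq_map, List.map_map]
  rfl

variable {m : ℕ} (X : ZMod (m + 1) → Matrix (Fin s) (Fin s) Rser)

lemma cycProd_eq_mul_prod (v : ZMod (m + 1)) :
    cycProd X v = X v * ((List.range m).map fun l : ℕ => X (v - 1 - l)).prod := by
  rw [cycProd_eq_prod_map, List.range_succ_eq_map, List.map_cons, List.prod_cons, List.map_map,
    Nat.cast_zero, sub_zero]
  congr 3
  funext l
  simp only [Function.comp_apply, Nat.succ_eq_add_one, Nat.cast_succ, sub_sub, add_comm]

lemma cycProd_eq_prod_mul (v : ZMod (m + 1)) :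
    cycProd X v = ((List.range m).map fun l : ℕ => X (v - l)).prod * X (v + 1) := by
  have hm : v - (m : ZMod (m + 1)) = v + 1 := by
    have h := ZMod.natCast_self (m + 1)
    push_cast at h
    linear_combination -h
  rw [cycProd_eq_prod_map, List.range_succ, List.map_append, List.prod_append, List.map_singleton,
    List.prod_singleton, hm]

lemma cycProd_add_one_mul (w : ZMod (m + 1)) :
    cycProd X (w + 1) * X (w + 1) = X (w + 1) * cycProd X w := by
  rw [cycProd_eq_mul_prod X (w + 1), cycProd_eq_prod_mul X w, add_sub_cancel_right, mul_assoc]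

variable {X}

lemma cycProd_eq_smul_one_of_zero (hX : ∀ i, IsRightRegular (X i)) {c : Rser}
    (h0 : cycProd X 0 = c • 1) (i : ZMod (m + 1)) : cycProd X i = c • 1 := by
  have hnat : ∀ r : ℕ, cycProd X r = c • 1 := by
    intro r
    induction r with
    | zero => simpa using h0
    | succ r ih =>
      push_cast
      apply hX (r + 1)
      simp only [cycProd_add_one_mul, ih, Matrix.mul_smul, Matrix.smul_mul, mul_one, one_mul]
  simpa using hnat i.val

end CycProd

lemma labelOfZ_neg_natCast {n l : ℕ} (hl : l ≤ n) :
    labelOfZ (n + 1) (-(l : ZMod (n + 1))) = n + 1 - l := by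
  rcases Nat.eq_zero_or_pos l with rfl | hl0
  · simp [labelOfZ]
  · have hv : (l : ZMod (n + 1)).val = l := ZMod.val_cast_of_lt (by omega)
    have hne : (l : ZMod (n + 1)) ≠ 0 := fun h => by rw [h, ZMod.val_zero] at hv; omega
    rw [labelOfZ, ZMod.neg_val, if_neg hne, hv, if_neg (by omega)]

lemma natCast_eq_neg_natCast {n a b : ℕ} (h : a + b = n) : (a : ZMod n) = -(b : ZMod n) := by
  rw [eq_neg_iff_add_eq_zero, ← Nat.cast_add, h, ZMod.natCast_self]

section IncData

variable {n s j : ℕ}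

lemma incData_neg_of_lt_sub (X : ZMod n → Matrix (Fin s) (Fin s) Rser)
    (A : Matrix (Fin s) (Fin s) Rser) {l : ℕ} (hl : l < n - j) :
    incData j X A (-(l : ZMod (n + 1))) = X (-(l : ZMod n)) := by
  rw [incData, labelOfZ_neg_natCast (by omega), if_neg (by omega), if_neg (by omega),
    natCast_eq_neg_natCast (b := l) (by omega)]

lemma incData_neg_sub (X : ZMod n → Matrix (Fin s) (Fin s) Rser)
    (A : Matrix (Fin s) (Fin s) Rser) (hj : j ≤ n) :
    incData j X A (-((n - j : ℕ) : ZMod (n + 1))) = A := by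
  rw [incData, labelOfZ_neg_natCast (by omega), if_neg (by omega), if_pos (by omega)]

lemma incData_neg_sub_add (X : ZMod n → Matrix (Fin s) (Fin s) Rser)
    (A : Matrix (Fin s) (Fin s) Rser) (hj : j ≤ n) {l : ℕ} (hl : l < j) :
    incData j X A (-((n - j + 1 + l : ℕ) : ZMod (n + 1))) =
      X (-((n - j + l : ℕ) : ZMod n)) := by
  rw [incData, labelOfZ_neg_natCast (by omega), if_pos (by omega),
    natCast_eq_neg_natCast (b := n - j + l) (by omega)]

lemma cycProd_incData_smul_zero (hj : j ≤ n) (X : ZMod n → Matrix (Fin s) (Fin s) Rser)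
    (c : Rser) : cycProd (incData j X (c • 1)) 0 = c • cycProd X 0 := by
  have hsplit : List.range (n + 1)
      = List.range (n - j) ++ (n - j) :: (List.range j).map (n - j + 1 + ·) := by
    rw [show n + 1 = n - j + 1 + j by omega, List.range_add, List.range_succ, List.append_assoc,
      List.singleton_append]
  have hsplit' : List.range n = List.range (n - j) ++ (List.range j).map (n - j + ·) := by
    rw [← List.range_add, Nat.sub_add_cancel hj]
  simp only [cycProd_eq_prod_map, zero_sub, hsplit, hsplit', List.map_append, List.map_cons,
    List.map_map, List.prod_append, List.prod_cons, Function.comp_def]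
  rw [List.map_congr_left fun l hl => incData_neg_of_lt_sub X (c • 1) (List.mem_range.mp hl),
    List.map_congr_left fun l hl => incData_neg_sub_add X (c • 1) hj (List.mem_range.mp hl),
    incData_neg_sub X _ hj, Matrix.smul_mul, one_mul, Matrix.mul_smul]

lemma incData_mul_incData {X Y : ZMod n → Matrix (Fin s) (Fin s) Rser}
    {A B P : Matrix (Fin s) (Fin s) Rser} (hXY : ∀ i, X i * Y i = P) (hAB : A * B = P)
    (i : ZMod (n + 1)) : incData j X A i * incData j Y B i = P := by
  unfold incData
  split_ifs <;> simp only [hXY, hAB]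

end IncData

lemma exists_incData_smul {k n s : ℕ} (M : CMMod k n s) {j : ℕ} (hj : j ≤ n) (k' : ℕ)
    {c d : Rser} (hcd : c * d = tser) (hpow : c * tser ^ (n - k) = tser ^ (n + 1 - k')) :
    ∃ M' : CMMod k' (n + 1) s,
      M'.X = incData j M.X (c • 1) ∧ M'.Y = incData j M.Y (d • 1) := by
  have hcd1 : (c • 1 : Matrix (Fin s) (Fin s) Rser) * d • 1 = tser • 1 := by
    rw [Matrix.smul_mul, Matrix.mul_smul, smul_smul, one_mul, hcd]
  have hdc1 : (d • 1 : Matrix (Fin s) (Fin s) Rser) * c • 1 = tser • 1 := by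
    rw [Matrix.smul_mul, Matrix.mul_smul, smul_smul, one_mul, mul_comm, hcd]
  have hXY := incData_mul_incData (j := j) M.hXY hcd1
  have hYX := incData_mul_incData (j := j) M.hYX hdc1
  have h0 : cycProd (incData j M.X (c • 1)) 0 = tser ^ (n + 1 - k') • 1 := by
    rw [cycProd_incData_smul_zero hj, M.hcyc, smul_smul, hpow]
  exact ⟨⟨_, _, hXY, hYX, cycProd_eq_smul_one_of_zero
    (fun i => isRightRegular_of_mul_eq_tser_smul (hXY i)) h0⟩, rfl, rfl⟩

theorem inc_is_CM_general (k n : ℕ) (hkn : k < n) (s : ℕ) (M : CMMod k n s)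
    (j : ℕ) (hj' : j ≤ n) :
    (∃ M' : CMMod (k + 1) (n + 1) s, IsInc j M M') ∧
    (∃ M'' : CMMod k (n + 1) s, IsCoInc j M M'') := by
  obtain ⟨M', hX', hY'⟩ := exists_incData_smul M hj' (k + 1) (one_mul tser)
    (by rw [one_mul, Nat.add_sub_add_right])
  obtain ⟨M'', hX'', hY''⟩ := exists_incData_smul M hj' k (mul_one tser)
    (by rw [← pow_succ', Nat.sub_add_comm hkn.le])
  rw [one_smul] at hX' hY''
  exact ⟨⟨M', hX', hY'⟩, M'', hX'', hY''⟩

/-- The 1-increase of a Cohen–Macaulay `B_{k,n}`-module satisfies the defining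
relations of `CM(B_{k+1,n+1})`, and the 1-co-increase satisfies the defining
relations of `CM(B_{k,n+1})`. -/
theorem inc_is_CM (k n : ℕ) (hk : 1 ≤ k) (hkn : k < n) (s : ℕ) (M : CMMod k n s)
    (j : ℕ) (hj : 1 ≤ j) (hj' : j ≤ n) :
    (∃ M' : CMMod (k + 1) (n + 1) s, IsInc j M M') ∧
    (∃ M'' : CMMod k (n + 1) s, IsCoInc j M M'') :=
  inc_is_CM_general k n hkn s M j hj'

end GCC
end
end

section
/- Let 1 ≤ k < n, let M and N be Cohen–Macaulay B_{k,n}-modules, and let j ∈ {1,…,n}. Every morphism (F_i)_{i∈ℤ/(n+1)} : inc_j(M) → inc_j(N) satisfies F_{j+1} = F_j, and the map sending a morphism (F_i)_{i∈ℤ/(n+1)} to the family obtained by deleting the component at the inserted index j+1 is a bijection (indeed an isomorphism of ℂ⟦t⟧-modules) from Hom(inc_j(M), inc_j(N)) onto Hom(M, N). The same statements hold with the 1-co-increase inc^c_j in place of inc_j. -/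
open scoped Classical

noncomputable section

namespace GCC

/-- Delete the component at the inserted index `j+1` from a cyclic family
indexed by `ℤ/(n+1)`, yielding a family indexed by `ℤ/n`. -/
def delData {n : ℕ} {α : Type} (j : ℕ) (F : ZMod (n + 1) → α) : ZMod n → α :=
  fun i =>
    if labelOfZ n i ≤ j then F ((labelOfZ n i : ℕ) : ZMod (n + 1))
    else F (((labelOfZ n i + 1 : ℕ) : ZMod (n + 1)))


lemma labelOfZ_pos {n : ℕ} (hn : 1 ≤ n) (z : ZMod n) : 1 ≤ labelOfZ n z := by
  unfold labelOfZ; split <;> omega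
lemma labelOfZ_le {n : ℕ} (hn : 1 ≤ n) (z : ZMod n) : labelOfZ n z ≤ n := by
  haveI : NeZero n := ⟨by omega⟩
  unfold labelOfZ; split
  · exact le_rfl
  · exact le_of_lt (ZMod.val_lt z)
lemma cast_labelOfZ {n : ℕ} (hn : 1 ≤ n) (z : ZMod n) :
    ((labelOfZ n z : ℕ) : ZMod n) = z := by
  haveI : NeZero n := ⟨by omega⟩
  unfold labelOfZ
  split
  · rw [ZMod.natCast_self]
    exact ((ZMod.val_eq_zero z).mp (by assumption)).symm
  · rw [ZMod.natCast_val, ZMod.cast_id]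
lemma labelOfZ_cast {n : ℕ} (ℓ : ℕ) (h1 : 1 ≤ ℓ) (h2 : ℓ ≤ n) :
    labelOfZ n ((ℓ : ℕ) : ZMod n) = ℓ := by
  haveI : NeZero n := ⟨by omega⟩
  unfold labelOfZ
  rcases eq_or_lt_of_le h2 with rfl | h
  · rw [ZMod.natCast_self]; simp
  · rw [ZMod.val_natCast_of_lt h, if_neg (by omega)]
lemma exists_label {n : ℕ} (hn : 1 ≤ n) (z : ZMod n) :
    ∃ ℓ : ℕ, 1 ≤ ℓ ∧ ℓ ≤ n ∧ z = ((ℓ : ℕ) : ZMod n) :=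
  ⟨labelOfZ n z, labelOfZ_pos hn z, labelOfZ_le hn z, (cast_labelOfZ hn z).symm⟩
lemma cast_pred {m ℓ : ℕ} (h : 1 ≤ ℓ) :
    ((ℓ : ℕ) : ZMod m) - 1 = ((ℓ - 1 : ℕ) : ZMod m) := by
  rw [Nat.cast_sub h, Nat.cast_one]

/-- General insertion (also works for non-square data). -/
def insData {α : Type} (n j : ℕ) (G : ZMod n → α) (A : α) : ZMod (n + 1) → α :=
  fun i' =>
    if labelOfZ (n + 1) i' ≤ j then G ((labelOfZ (n + 1) i' : ℕ) : ZMod n)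
    else if labelOfZ (n + 1) i' = j + 1 then A
    else G (((labelOfZ (n + 1) i' - 1 : ℕ) : ZMod n))

lemma insData_le {α : Type} {n j : ℕ} {G : ZMod n → α} {A : α} {ℓ : ℕ}
    (h1 : 1 ≤ ℓ) (h2 : ℓ ≤ j) (hj : j ≤ n) :
    insData n j G A ((ℓ : ℕ) : ZMod (n + 1)) = G ((ℓ : ℕ) : ZMod n) := by
  unfold insData
  rw [labelOfZ_cast ℓ h1 (by omega), if_pos h2]

lemma insData_mid {α : Type} {n j : ℕ} {G : ZMod n → α} {A : α} (hj : j ≤ n) :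
    insData n j G A ((j + 1 : ℕ) : ZMod (n + 1)) = A := by
  unfold insData
  rw [labelOfZ_cast (j + 1) (by omega) (by omega), if_neg (by omega), if_pos rfl]

lemma insData_gt {α : Type} {n j : ℕ} {G : ZMod n → α} {A : α} {ℓ : ℕ}
    (h1 : j + 2 ≤ ℓ) (h2 : ℓ ≤ n + 1) :
    insData n j G A ((ℓ : ℕ) : ZMod (n + 1)) = G ((ℓ - 1 : ℕ) : ZMod n) := by
  unfold insData
  rw [labelOfZ_cast ℓ (by omega) h2, if_neg (by omega), if_neg (by omega)]

lemma delData_le {α : Type} {n j : ℕ} {F : ZMod (n + 1) → α} {ℓ : ℕ}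
    (h1 : 1 ≤ ℓ) (h2 : ℓ ≤ j) (h3 : ℓ ≤ n) :
    delData j F ((ℓ : ℕ) : ZMod n) = F ((ℓ : ℕ) : ZMod (n + 1)) := by
  unfold delData
  rw [labelOfZ_cast ℓ h1 h3, if_pos h2]

lemma delData_gt {α : Type} {n j : ℕ} {F : ZMod (n + 1) → α} {ℓ : ℕ}
    (h2 : j < ℓ) (h3 : ℓ ≤ n) :
    delData j F ((ℓ : ℕ) : ZMod n) = F ((ℓ + 1 : ℕ) : ZMod (n + 1)) := by
  unfold delData
  rw [labelOfZ_cast ℓ (by omega) h3, if_neg (by omega)]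

lemma del_ins {α : Type} {n j : ℕ} (hn : 1 ≤ n) (hj' : j ≤ n) {G : ZMod n → α} {A : α} :
    delData j (insData n j G A) = G := by
  funext i
  obtain ⟨ℓ, h1, h2, rfl⟩ := exists_label hn i
  by_cases hc : ℓ ≤ j
  · rw [delData_le h1 hc h2, insData_le h1 hc hj']
  · rw [delData_gt (by omega) h2, insData_gt (by omega) (by omega),
      show (ℓ + 1 - 1 : ℕ) = ℓ from by omega]

lemma ins_del {α : Type} {n j : ℕ} (hn : 1 ≤ n) (hj : 1 ≤ j) (hj' : j ≤ n)
    {F : ZMod (n + 1) → α}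
    (hkey : F ((j + 1 : ℕ) : ZMod (n + 1)) = F ((j : ℕ) : ZMod (n + 1))) :
    insData n j (delData j F) (F ((j : ℕ) : ZMod (n + 1))) = F := by
  funext i'
  obtain ⟨ℓ, h1, h2, rfl⟩ := exists_label (by omega : 1 ≤ n + 1) i'
  by_cases hc : ℓ ≤ j
  · rw [insData_le h1 hc hj', delData_le h1 hc (by omega)]
  · by_cases he : ℓ = j + 1
    · subst he
      rw [insData_mid hj']
      exact hkey.symm
    · rw [insData_gt (by omega) h2, delData_gt (by omega) (by omega),
        show (ℓ - 1 + 1 : ℕ) = ℓ from by omega]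


section homlemmas
variable {n j s s' : ℕ}

lemma key_X {P : ZMod n → Matrix (Fin s) (Fin s) Rser}
    {Q : ZMod n → Matrix (Fin s') (Fin s') Rser}
    {F : ZMod (n + 1) → Matrix (Fin s') (Fin s) Rser} (hj' : j ≤ n)
    (H : ∀ i', F i' * insData n j P 1 i' = insData n j Q 1 i' * F (i' - 1)) :
    F ((j + 1 : ℕ) : ZMod (n + 1)) = F ((j : ℕ) : ZMod (n + 1)) := by
  have H1 := H ((j + 1 : ℕ) : ZMod (n + 1))
  rw [insData_mid hj', insData_mid hj', Matrix.mul_one, Matrix.one_mul, cast_pred (by omega),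
    show (j + 1 - 1 : ℕ) = j from by omega] at H1
  exact H1

lemma key_Y {P : ZMod n → Matrix (Fin s) (Fin s) Rser}
    {Q : ZMod n → Matrix (Fin s') (Fin s') Rser}
    {F : ZMod (n + 1) → Matrix (Fin s') (Fin s) Rser} (hj' : j ≤ n)
    (H : ∀ i', F (i' - 1) * insData n j P 1 i' = insData n j Q 1 i' * F i') :
    F ((j + 1 : ℕ) : ZMod (n + 1)) = F ((j : ℕ) : ZMod (n + 1)) := by
  have H1 := H ((j + 1 : ℕ) : ZMod (n + 1))
  rw [insData_mid hj', insData_mid hj', Matrix.mul_one, Matrix.one_mul, cast_pred (by omega),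
    show (j + 1 - 1 : ℕ) = j from by omega] at H1
  exact H1.symm

lemma del_homX (hn : 1 ≤ n) (hj : 1 ≤ j) (hj' : j ≤ n)
    {P : ZMod n → Matrix (Fin s) (Fin s) Rser}
    {Q : ZMod n → Matrix (Fin s') (Fin s') Rser}
    {AM : Matrix (Fin s) (Fin s) Rser} {AN : Matrix (Fin s') (Fin s') Rser}
    {F : ZMod (n + 1) → Matrix (Fin s') (Fin s) Rser}
    (H : ∀ i', F i' * insData n j P AM i' = insData n j Q AN i' * F (i' - 1))
    (hkey : F ((j + 1 : ℕ) : ZMod (n + 1)) = F ((j : ℕ) : ZMod (n + 1))) :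
    ∀ i, delData j F i * P i = Q i * delData j F (i - 1) := by
  intro i
  obtain ⟨ℓ, h1, h2, rfl⟩ := exists_label hn i
  by_cases hc : ℓ ≤ j
  · have H1 := H ((ℓ : ℕ) : ZMod (n + 1))
    rw [insData_le h1 hc hj', insData_le h1 hc hj', cast_pred h1] at H1
    rw [delData_le h1 hc h2, cast_pred h1]
    by_cases h3 : 2 ≤ ℓ
    · rwa [delData_le (by omega) (by omega) (by omega)]
    · have hℓ1 : ℓ = 1 := by omega
      subst hℓ1
      have e0 : ((1 - 1 : ℕ) : ZMod n) = ((n : ℕ) : ZMod n) := by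
        simp [ZMod.natCast_self]
      rw [e0]
      by_cases hjn : j = n
      · rw [delData_le hn (by omega) le_rfl]
        have e1 : F (((n : ℕ)) : ZMod (n + 1)) = F (((1 - 1 : ℕ)) : ZMod (n + 1)) := by
          subst hjn
          rw [← hkey]
          norm_num [ZMod.natCast_self]
        rw [e1]; exact H1
      · rw [delData_gt (by omega) le_rfl]
        have e1 : (((n + 1 : ℕ)) : ZMod (n + 1)) = (((1 - 1 : ℕ)) : ZMod (n + 1)) := by
          simp [ZMod.natCast_self]
        rw [e1]; exact H1
  · push_neg at hc
    have H1 := H ((ℓ + 1 : ℕ) : ZMod (n + 1))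
    rw [insData_gt (by omega) (by omega), insData_gt (by omega) (by omega),
      cast_pred (by omega), show (ℓ + 1 - 1 : ℕ) = ℓ from by omega] at H1
    rw [delData_gt hc h2, cast_pred (by omega : 1 ≤ ℓ)]
    by_cases h4 : j < ℓ - 1
    · rw [delData_gt h4 (by omega), show (ℓ - 1 + 1 : ℕ) = ℓ from by omega]
      exact H1
    · have he : ℓ = j + 1 := by omega
      subst he
      rw [show (j + 1 - 1 : ℕ) = j from by omega, delData_le hj le_rfl hj', ← hkey]
      exact H1

lemma del_homY (hn : 1 ≤ n) (hj : 1 ≤ j) (hj' : j ≤ n)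
    {P : ZMod n → Matrix (Fin s) (Fin s) Rser}
    {Q : ZMod n → Matrix (Fin s') (Fin s') Rser}
    {AM : Matrix (Fin s) (Fin s) Rser} {AN : Matrix (Fin s') (Fin s') Rser}
    {F : ZMod (n + 1) → Matrix (Fin s') (Fin s) Rser}
    (H : ∀ i', F (i' - 1) * insData n j P AM i' = insData n j Q AN i' * F i')
    (hkey : F ((j + 1 : ℕ) : ZMod (n + 1)) = F ((j : ℕ) : ZMod (n + 1))) :
    ∀ i, delData j F (i - 1) * P i = Q i * delData j F i := by
  intro i
  obtain ⟨ℓ, h1, h2, rfl⟩ := exists_label hn i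
  by_cases hc : ℓ ≤ j
  · have H1 := H ((ℓ : ℕ) : ZMod (n + 1))
    rw [insData_le h1 hc hj', insData_le h1 hc hj', cast_pred h1] at H1
    rw [delData_le h1 hc h2, cast_pred h1]
    by_cases h3 : 2 ≤ ℓ
    · rwa [delData_le (by omega) (by omega) (by omega)]
    · have hℓ1 : ℓ = 1 := by omega
      subst hℓ1
      have e0 : ((1 - 1 : ℕ) : ZMod n) = ((n : ℕ) : ZMod n) := by
        simp [ZMod.natCast_self]
      rw [e0]
      by_cases hjn : j = n
      · rw [delData_le hn (by omega) le_rfl]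
        have e1 : F (((n : ℕ)) : ZMod (n + 1)) = F (((1 - 1 : ℕ)) : ZMod (n + 1)) := by
          subst hjn
          rw [← hkey]
          norm_num [ZMod.natCast_self]
        rw [e1]; exact H1
      · rw [delData_gt (by omega) le_rfl]
        have e1 : (((n + 1 : ℕ)) : ZMod (n + 1)) = (((1 - 1 : ℕ)) : ZMod (n + 1)) := by
          simp [ZMod.natCast_self]
        rw [e1]; exact H1
  · push_neg at hc
    have H1 := H ((ℓ + 1 : ℕ) : ZMod (n + 1))
    rw [insData_gt (by omega) (by omega), insData_gt (by omega) (by omega),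
      cast_pred (by omega), show (ℓ + 1 - 1 : ℕ) = ℓ from by omega] at H1
    rw [delData_gt hc h2, cast_pred (by omega : 1 ≤ ℓ)]
    by_cases h4 : j < ℓ - 1
    · rw [delData_gt h4 (by omega), show (ℓ - 1 + 1 : ℕ) = ℓ from by omega]
      exact H1
    · have he : ℓ = j + 1 := by omega
      subst he
      rw [show (j + 1 - 1 : ℕ) = j from by omega, delData_le hj le_rfl hj', ← hkey]
      exact H1


lemma ins_homX (hn : 1 ≤ n) (hj : 1 ≤ j) (hj' : j ≤ n)
    {P : ZMod n → Matrix (Fin s) (Fin s) Rser}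
    {Q : ZMod n → Matrix (Fin s') (Fin s') Rser}
    {AM : Matrix (Fin s) (Fin s) Rser} {AN : Matrix (Fin s') (Fin s') Rser}
    {G : ZMod n → Matrix (Fin s') (Fin s) Rser}
    (hA : ∀ B : Matrix (Fin s') (Fin s) Rser, B * AM = AN * B)
    (H : ∀ i, G i * P i = Q i * G (i - 1)) :
    ∀ i', insData n j G (G ((j : ℕ) : ZMod n)) i' * insData n j P AM i' =
      insData n j Q AN i' * insData n j G (G ((j : ℕ) : ZMod n)) (i' - 1) := by
  intro i'
  obtain ⟨ℓ, h1, h2, rfl⟩ := exists_label (by omega : 1 ≤ n + 1) i'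
  by_cases hc : ℓ ≤ j
  · rw [insData_le h1 hc hj', insData_le h1 hc hj', insData_le h1 hc hj', cast_pred h1]
    by_cases h3 : 2 ≤ ℓ
    · rw [insData_le (by omega) (by omega) hj']
      have H1 := H ((ℓ : ℕ) : ZMod n)
      rwa [cast_pred h1] at H1
    · have hℓ1 : ℓ = 1 := by omega
      subst hℓ1
      have H1 := H ((1 : ℕ) : ZMod n)
      rw [cast_pred le_rfl] at H1
      have e0 : ((1 - 1 : ℕ) : ZMod (n + 1)) = ((n + 1 : ℕ) : ZMod (n + 1)) := by
        norm_num [ZMod.natCast_self]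
      rw [e0]
      by_cases hjn : j = n
      · subst hjn
        rw [insData_mid le_rfl]
        have e1 : G (((j : ℕ)) : ZMod j) = G (((1 - 1 : ℕ)) : ZMod j) := by
          norm_num [ZMod.natCast_self]
        rw [e1]; exact H1
      · rw [insData_gt (by omega) le_rfl]
        have e1 : ((n + 1 - 1 : ℕ) : ZMod n) = ((1 - 1 : ℕ) : ZMod n) := by
          norm_num [ZMod.natCast_self]
        rw [e1]; exact H1
  · by_cases he : ℓ = j + 1
    · subst he
      rw [insData_mid hj', insData_mid hj', insData_mid hj', cast_pred (by omega),
        show (j + 1 - 1 : ℕ) = j from by omega, insData_le hj le_rfl hj']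
      exact hA _
    · rw [insData_gt (by omega) h2, insData_gt (by omega) h2, insData_gt (by omega) h2,
        cast_pred (by omega)]
      have H1 := H ((ℓ - 1 : ℕ) : ZMod n)
      rw [cast_pred (by omega : 1 ≤ ℓ - 1)] at H1
      by_cases h4 : ℓ = j + 2
      · subst h4
        rw [show (j + 2 - 1 : ℕ) = j + 1 from by omega] at H1 ⊢
        rw [insData_mid hj', show (j + 1 - 1 : ℕ) = j from by omega] at *
        exact H1
      · rw [insData_gt (by omega) (by omega)]
        exact H1

lemma ins_homY (hn : 1 ≤ n) (hj : 1 ≤ j) (hj' : j ≤ n)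
    {P : ZMod n → Matrix (Fin s) (Fin s) Rser}
    {Q : ZMod n → Matrix (Fin s') (Fin s') Rser}
    {AM : Matrix (Fin s) (Fin s) Rser} {AN : Matrix (Fin s') (Fin s') Rser}
    {G : ZMod n → Matrix (Fin s') (Fin s) Rser}
    (hA : ∀ B : Matrix (Fin s') (Fin s) Rser, B * AM = AN * B)
    (H : ∀ i, G (i - 1) * P i = Q i * G i) :
    ∀ i', insData n j G (G ((j : ℕ) : ZMod n)) (i' - 1) * insData n j P AM i' =
      insData n j Q AN i' * insData n j G (G ((j : ℕ) : ZMod n)) i' := by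
  intro i'
  obtain ⟨ℓ, h1, h2, rfl⟩ := exists_label (by omega : 1 ≤ n + 1) i'
  by_cases hc : ℓ ≤ j
  · rw [insData_le h1 hc hj', insData_le h1 hc hj', insData_le h1 hc hj', cast_pred h1]
    by_cases h3 : 2 ≤ ℓ
    · rw [insData_le (by omega) (by omega) hj']
      have H1 := H ((ℓ : ℕ) : ZMod n)
      rwa [cast_pred h1] at H1
    · have hℓ1 : ℓ = 1 := by omega
      subst hℓ1
      have H1 := H ((1 : ℕ) : ZMod n)
      rw [cast_pred le_rfl] at H1
      have e0 : ((1 - 1 : ℕ) : ZMod (n + 1)) = ((n + 1 : ℕ) : ZMod (n + 1)) := by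
        norm_num [ZMod.natCast_self]
      rw [e0]
      by_cases hjn : j = n
      · subst hjn
        rw [insData_mid le_rfl]
        have e1 : G (((j : ℕ)) : ZMod j) = G (((1 - 1 : ℕ)) : ZMod j) := by
          norm_num [ZMod.natCast_self]
        rw [e1]; exact H1
      · rw [insData_gt (by omega) le_rfl]
        have e1 : ((n + 1 - 1 : ℕ) : ZMod n) = ((1 - 1 : ℕ) : ZMod n) := by
          norm_num [ZMod.natCast_self]
        rw [e1]; exact H1
  · by_cases he : ℓ = j + 1
    · subst he
      rw [insData_mid hj', insData_mid hj', insData_mid hj', cast_pred (by omega),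
        show (j + 1 - 1 : ℕ) = j from by omega, insData_le hj le_rfl hj']
      exact hA _
    · rw [insData_gt (by omega) h2, insData_gt (by omega) h2, insData_gt (by omega) h2,
        cast_pred (by omega)]
      have H1 := H ((ℓ - 1 : ℕ) : ZMod n)
      rw [cast_pred (by omega : 1 ≤ ℓ - 1)] at H1
      by_cases h4 : ℓ = j + 2
      · subst h4
        rw [show (j + 2 - 1 : ℕ) = j + 1 from by omega] at H1 ⊢
        rw [insData_mid hj', show (j + 1 - 1 : ℕ) = j from by omega] at *
        exact H1
      · rw [insData_gt (by omega) (by omega)]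
        exact H1

end homlemmas

lemma CMHom_ext {k n s s' : ℕ} {M : CMMod k n s} {M' : CMMod k n s'}
    {f g : CMHom M M'} (h : f.F = g.F) : f = g := by
  cases f; cases g; cases h; rfl

lemma half {k k₂ n sM sN j : ℕ} (hn : 1 ≤ n) (hj : 1 ≤ j) (hj' : j ≤ n)
    {M : CMMod k n sM} {N : CMMod k n sN}
    {M' : CMMod k₂ (n + 1) sM} {N' : CMMod k₂ (n + 1) sN}
    {AXM : Matrix (Fin sM) (Fin sM) Rser} {AXN : Matrix (Fin sN) (Fin sN) Rser}
    {AYM : Matrix (Fin sM) (Fin sM) Rser} {AYN : Matrix (Fin sN) (Fin sN) Rser}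
    (hMX : M'.X = insData n j M.X AXM) (hMY : M'.Y = insData n j M.Y AYM)
    (hNX : N'.X = insData n j N.X AXN) (hNY : N'.Y = insData n j N.Y AYN)
    (hAX : ∀ B : Matrix (Fin sN) (Fin sM) Rser, B * AXM = AXN * B)
    (hAY : ∀ B : Matrix (Fin sN) (Fin sM) Rser, B * AYM = AYN * B)
    (hkey : ∀ f : CMHom M' N', f.F ((j + 1 : ℕ) : ZMod (n + 1)) = f.F ((j : ℕ) : ZMod (n + 1))) :
    (∀ f : CMHom M' N', f.F (((j + 1 : ℕ) : ZMod (n + 1))) = f.F ((j : ℕ) : ZMod (n + 1))) ∧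
     ∃ Φ : CMHom M' N' → CMHom M N,
       (∀ f, (Φ f).F = delData j f.F) ∧ Function.Bijective Φ ∧
       (∀ f g h : CMHom M' N', (∀ i, h.F i = f.F i + g.F i) →
         ∀ i, (Φ h).F i = (Φ f).F i + (Φ g).F i) ∧
       (∀ (c : Rser) (f h : CMHom M' N'), (∀ i, h.F i = c • f.F i) →
         ∀ i, (Φ h).F i = c • (Φ f).F i) := by
  refine ⟨hkey, ?_⟩
  let Φ : CMHom M' N' → CMHom M N := fun f =>
    { F := delData j f.F
      hX := by
        have H := f.hX
        simp only [hMX, hNX] at H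
        exact del_homX hn hj hj' H (hkey f)
      hY := by
        have H := f.hY
        simp only [hMY, hNY] at H
        exact del_homY hn hj hj' H (hkey f) }
  let Ψ : CMHom M N → CMHom M' N' := fun g =>
    { F := insData n j g.F (g.F ((j : ℕ) : ZMod n))
      hX := by
        have H := ins_homX hn hj hj' hAX g.hX
        simp only [hMX, hNX]
        exact H
      hY := by
        have H := ins_homY hn hj hj' hAY g.hY
        simp only [hMY, hNY]
        exact H }
  refine ⟨Φ, fun f => rfl, ?_, ?_, ?_⟩
  · refine Function.bijective_iff_has_inverse.mpr ⟨Ψ, ?_, ?_⟩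
    · intro f
      apply CMHom_ext
      show insData n j (delData j f.F) (delData j f.F ((j : ℕ) : ZMod n)) = f.F
      rw [delData_le hj le_rfl hj']
      exact ins_del hn hj hj' (hkey f)
    · intro g
      apply CMHom_ext
      show delData j (insData n j g.F (g.F ((j : ℕ) : ZMod n))) = g.F
      exact del_ins hn hj'
  · intro f g h hh i
    show delData j h.F i = delData j f.F i + delData j g.F i
    by_cases hc : labelOfZ n i ≤ j
    · simp only [delData, if_pos hc, hh]
    · simp only [delData, if_neg hc, hh]
  · intro c f h hh i
    show delData j h.F i = c • delData j f.F i
    by_cases hc : labelOfZ n i ≤ j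
    · simp only [delData, if_pos hc, hh]
    · simp only [delData, if_neg hc, hh]

/-- Deleting the inserted component is a bijection (an isomorphism of
`ℂ⟦t⟧`-modules) `Hom(inc_j M, inc_j N) ≃ Hom(M, N)`; in particular every
morphism between 1-increases satisfies `F_{j+1} = F_j`. The same holds for
1-co-increases. -/
theorem hom_inc_equiv (k n : ℕ) (hk : 1 ≤ k) (hkn : k < n) (sM sN : ℕ)
    (M : CMMod k n sM) (N : CMMod k n sN) (j : ℕ) (hj : 1 ≤ j) (hj' : j ≤ n)
    (M' : CMMod (k + 1) (n + 1) sM) (hM' : IsInc j M M')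
    (N' : CMMod (k + 1) (n + 1) sN) (hN' : IsInc j N N')
    (M'' : CMMod k (n + 1) sM) (hM'' : IsCoInc j M M'')
    (N'' : CMMod k (n + 1) sN) (hN'' : IsCoInc j N N'') :
    ((∀ f : CMHom M' N', f.F (((j + 1 : ℕ) : ZMod (n + 1))) = f.F ((j : ℕ) : ZMod (n + 1))) ∧
     ∃ Φ : CMHom M' N' → CMHom M N,
       (∀ f, (Φ f).F = delData j f.F) ∧ Function.Bijective Φ ∧
       (∀ f g h : CMHom M' N', (∀ i, h.F i = f.F i + g.F i) →
         ∀ i, (Φ h).F i = (Φ f).F i + (Φ g).F i) ∧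
       (∀ (c : Rser) (f h : CMHom M' N'), (∀ i, h.F i = c • f.F i) →
         ∀ i, (Φ h).F i = c • (Φ f).F i)) ∧
    ((∀ f : CMHom M'' N'', f.F (((j + 1 : ℕ) : ZMod (n + 1))) = f.F ((j : ℕ) : ZMod (n + 1))) ∧
     ∃ Φ : CMHom M'' N'' → CMHom M N,
       (∀ f, (Φ f).F = delData j f.F) ∧ Function.Bijective Φ ∧
       (∀ f g h : CMHom M'' N'', (∀ i, h.F i = f.F i + g.F i) →
         ∀ i, (Φ h).F i = (Φ f).F i + (Φ g).F i) ∧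
       (∀ (c : Rser) (f h : CMHom M'' N''), (∀ i, h.F i = c • f.F i) →
         ∀ i, (Φ h).F i = c • (Φ f).F i)) := by
  have hn : 1 ≤ n := by omega
  have hA1 : ∀ B : Matrix (Fin sN) (Fin sM) Rser,
      B * (1 : Matrix (Fin sM) (Fin sM) Rser) = (1 : Matrix (Fin sN) (Fin sN) Rser) * B :=
    fun B => by rw [Matrix.mul_one, Matrix.one_mul]
  have hAt : ∀ B : Matrix (Fin sN) (Fin sM) Rser,
      B * (tser • (1 : Matrix (Fin sM) (Fin sM) Rser)) =
        (tser • (1 : Matrix (Fin sN) (Fin sN) Rser)) * B :=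
    fun B => by rw [Matrix.mul_smul, Matrix.mul_one, Matrix.smul_mul, Matrix.one_mul]
  have keyI : ∀ f : CMHom M' N',
      f.F ((j + 1 : ℕ) : ZMod (n + 1)) = f.F ((j : ℕ) : ZMod (n + 1)) := by
    intro f
    refine key_X (P := M.X) (Q := N.X) hj' ?_
    have H := f.hX
    simp only [hM'.1, hN'.1] at H
    exact H
  have keyC : ∀ f : CMHom M'' N'',
      f.F ((j + 1 : ℕ) : ZMod (n + 1)) = f.F ((j : ℕ) : ZMod (n + 1)) := by
    intro f
    refine key_Y (P := M.Y) (Q := N.Y) hj' ?_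
    have H := f.hY
    simp only [hM''.2, hN''.2] at H
    exact H
  exact ⟨half hn hj hj' (hM'.1.trans rfl) (hM'.2.trans rfl) (hN'.1.trans rfl)
      (hN'.2.trans rfl) hA1 hAt keyI,
    half hn hj hj' (hM''.1.trans rfl) (hM''.2.trans rfl) (hN''.1.trans rfl)
      (hN''.2.trans rfl) hAt hA1 keyC⟩


end GCC
end
end

section
/- Let 1 ≤ k ≤ n. In ℤ^n with standard basis e_1,…,e_n, set α_i = e_{i+1} − e_i for 1 ≤ i ≤ n−1 and β = e_1 + ⋯ + e_k. Then the n vectors α_1, …, α_{n−1}, β are linearly independent over ℚ, and their span over ℤ equals the lattice ℤ^n(k) = {x ∈ ℤ^n : k divides x_1 + ⋯ + x_n}. (This identifies the root lattice of the Kac–Moody root system J_{k,n}, whose simple roots are α_1,…,α_{n−1},β, with ℤ^n(k).) -/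
open scoped Classical

noncomputable section

namespace GCC

/-- The simple roots of `J_{k,n}` realized in `ℤⁿ`: the first `n−1` indices
give `α_j = e_{j+1} − e_j` and the last index gives `β = e_1 + ⋯ + e_k`. -/
def jknRoot (k n : ℕ) (j : Fin n) : Fin n → ℤ :=
  if (j : ℕ) + 1 < n then
    fun l => (if (l : ℕ) = (j : ℕ) + 1 then (1 : ℤ) else 0) - (if l = j then 1 else 0)
  else fun l => if (l : ℕ) < k then 1 else 0

section Aux

variable (k n : ℕ)

private lemma sum_ind (m : ℕ) (hm : m < n) :
    (∑ l : Fin n, if (l : ℕ) = m then (1 : ℤ) else 0) = 1 := by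
  rw [Fin.sum_univ_eq_sum_range (fun i => if i = m then (1 : ℤ) else 0)]
  simp [Finset.sum_ite_eq', hm]

private lemma sum_lt (hkn : k ≤ n) :
    (∑ l : Fin n, if (l : ℕ) < k then (1 : ℤ) else 0) = k := by
  rw [Fin.sum_univ_eq_sum_range (fun i => if i < k then (1 : ℤ) else 0)]
  rw [Finset.sum_ite, Finset.sum_const, Finset.sum_const_zero, add_zero]
  have h : (Finset.range n).filter (fun i => i < k) = Finset.range k := by
    ext i; simp; omega
  rw [h]; simp

private lemma sum_jknRoot (hkn : k ≤ n) (j : Fin n) :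
    (k : ℤ) ∣ ∑ l, jknRoot k n j l := by
  unfold jknRoot
  by_cases h : (j : ℕ) + 1 < n
  · rw [if_pos h]
    rw [Finset.sum_sub_distrib]
    have h1 := sum_ind n ((j : ℕ) + 1) h
    have h2 : (∑ l : Fin n, if l = j then (1 : ℤ) else 0) = 1 := by
      have : ∀ l : Fin n, (l = j) = ((l : ℕ) = (j : ℕ)) := by
        intro l; simp [Fin.ext_iff]
      simp only [this]
      exact sum_ind n (j : ℕ) j.isLt
    rw [h1, h2]; simp
  · rw [if_neg h, sum_lt k n hkn]

private lemma mem_d (hkn : k ≤ n) :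
    ∀ m : ℕ, m < n →
      (fun l : Fin n => (if (l : ℕ) = m then (1 : ℤ) else 0) -
        (if (l : ℕ) = 0 then 1 else 0))
        ∈ Submodule.span ℤ (Set.range (jknRoot k n)) := by
  intro m
  induction m with
  | zero =>
    intro _
    have h0 : (fun l : Fin n => (if (l : ℕ) = 0 then (1 : ℤ) else 0) -
        (if (l : ℕ) = 0 then 1 else 0)) = 0 := by
      funext l; simp
    rw [h0]; exact zero_mem _
  | succ m ih =>
    intro hm
    have hm' : m < n := Nat.lt_of_succ_lt hm
    have hroot : jknRoot k n ⟨m, hm'⟩ ∈ Submodule.span ℤ (Set.range (jknRoot k n)) :=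
      Submodule.subset_span (Set.mem_range_self _)
    have key : (fun l : Fin n => (if (l : ℕ) = m + 1 then (1 : ℤ) else 0) -
          (if (l : ℕ) = 0 then 1 else 0))
        = (fun l : Fin n => (if (l : ℕ) = m then (1 : ℤ) else 0) -
            (if (l : ℕ) = 0 then 1 else 0)) + jknRoot k n ⟨m, hm'⟩ := by
      funext l
      simp only [Pi.add_apply, jknRoot, Fin.ext_iff]
      rw [if_pos (show (m : ℕ) + 1 < n from hm)]
      ring
    rw [key]
    exact add_mem (ih hm') hroot

private lemma beta_mem (hk : 1 ≤ k) (hkn : k ≤ n) :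
    (fun l : Fin n => if (l : ℕ) < k then (1 : ℤ) else 0)
      ∈ Submodule.span ℤ (Set.range (jknRoot k n)) := by
  have hn : 0 < n := lt_of_lt_of_le hk hkn
  have hb : jknRoot k n ⟨n - 1, Nat.sub_lt hn one_pos⟩
      = (fun l : Fin n => if (l : ℕ) < k then (1 : ℤ) else 0) := by
    unfold jknRoot
    rw [if_neg]; simp; omega
  rw [← hb]; exact Submodule.subset_span (Set.mem_range_self _)

private lemma mem_ke0 (hk : 1 ≤ k) (hkn : k ≤ n) :
    (fun l : Fin n => if (l : ℕ) = 0 then (k : ℤ) else 0)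
      ∈ Submodule.span ℤ (Set.range (jknRoot k n)) := by
  have hβ := beta_mem k n hk hkn
  have hsum : (∑ i ∈ Finset.range k, fun l : Fin n =>
      (if (l : ℕ) = i then (1 : ℤ) else 0) - (if (l : ℕ) = 0 then 1 else 0))
      ∈ Submodule.span ℤ (Set.range (jknRoot k n)) :=
    Submodule.sum_mem _ fun i hi =>
      mem_d k n hkn i (lt_of_lt_of_le (Finset.mem_range.mp hi) hkn)
  have key : (fun l : Fin n => if (l : ℕ) = 0 then (k : ℤ) else 0)
      = (fun l : Fin n => if (l : ℕ) < k then (1 : ℤ) else 0)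
        - ∑ i ∈ Finset.range k, fun l : Fin n =>
            (if (l : ℕ) = i then (1 : ℤ) else 0) - (if (l : ℕ) = 0 then 1 else 0) := by
    funext l
    simp only [Pi.sub_apply, Finset.sum_apply, Finset.sum_sub_distrib,
      Finset.sum_const, Finset.card_range]
    rw [Finset.sum_ite_eq (Finset.range k) (l : ℕ) (fun _ => (1 : ℤ))]
    by_cases hl : (l : ℕ) = 0 <;> simp [hl, Finset.mem_range]
  rw [key]
  exact sub_mem hβ hsum

end Aux

/-- The simple roots `α_1, …, α_{n−1}, β` of `J_{k,n}` are linearly independent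
over `ℚ`, and their span over `ℤ` is the lattice
`ℤⁿ(k) = {x ∈ ℤⁿ : k ∣ x_1 + ⋯ + x_n}`. -/
theorem jkn_root_lattice (k n : ℕ) (hk : 1 ≤ k) (hkn : k ≤ n) :
    LinearIndependent ℚ (fun j : Fin n => fun l : Fin n => ((jknRoot k n j l : ℚ))) ∧
    ∀ x : Fin n → ℤ, x ∈ Submodule.span ℤ (Set.range (jknRoot k n)) ↔
      (k : ℤ) ∣ ∑ i, x i := by
  constructor
  · -- linear independence over ℚ via spanning + cardinality
    set v : Fin n → (Fin n → ℚ) :=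
      fun j => fun l => ((jknRoot k n j l : ℚ)) with hv
    -- d over ℚ
    have mem_dq : ∀ m : ℕ, m < n →
        (fun l : Fin n => (if (l : ℕ) = m then (1 : ℚ) else 0) -
          (if (l : ℕ) = 0 then 1 else 0))
          ∈ Submodule.span ℚ (Set.range v) := by
      intro m
      induction m with
      | zero =>
        intro _
        have h0 : (fun l : Fin n => (if (l : ℕ) = 0 then (1 : ℚ) else 0) -
            (if (l : ℕ) = 0 then 1 else 0)) = 0 := by
          funext l; simp
        rw [h0]; exact zero_mem _
      | succ m ih =>
        intro hm
        have hm' : m < n := Nat.lt_of_succ_lt hm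
        have hroot : v ⟨m, hm'⟩ ∈ Submodule.span ℚ (Set.range v) :=
          Submodule.subset_span (Set.mem_range_self _)
        have key : (fun l : Fin n => (if (l : ℕ) = m + 1 then (1 : ℚ) else 0) -
              (if (l : ℕ) = 0 then 1 else 0))
            = (fun l : Fin n => (if (l : ℕ) = m then (1 : ℚ) else 0) -
                (if (l : ℕ) = 0 then 1 else 0)) + v ⟨m, hm'⟩ := by
          funext l
          simp only [hv, Pi.add_apply, jknRoot, Fin.ext_iff]
          rw [if_pos (show (m : ℕ) + 1 < n from hm)]
          push_cast
          ring
        rw [key]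
        exact add_mem (ih hm') hroot
    have hβq : (fun l : Fin n => if (l : ℕ) < k then (1 : ℚ) else 0)
        ∈ Submodule.span ℚ (Set.range v) := by
      have hn : 0 < n := lt_of_lt_of_le hk hkn
      have hb : v ⟨n - 1, Nat.sub_lt hn one_pos⟩
          = (fun l : Fin n => if (l : ℕ) < k then (1 : ℚ) else 0) := by
        funext l
        simp only [hv, jknRoot]
        rw [if_neg (by omega)]
        split <;> simp
      rw [← hb]; exact Submodule.subset_span (Set.mem_range_self _)
    have mem_e0 : (fun l : Fin n => if (l : ℕ) = 0 then (1 : ℚ) else 0)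
        ∈ Submodule.span ℚ (Set.range v) := by
      have hsum : (∑ i ∈ Finset.range k, fun l : Fin n =>
          (if (l : ℕ) = i then (1 : ℚ) else 0) - (if (l : ℕ) = 0 then 1 else 0))
          ∈ Submodule.span ℚ (Set.range v) :=
        Submodule.sum_mem _ fun i hi =>
          mem_dq i (lt_of_lt_of_le (Finset.mem_range.mp hi) hkn)
      have key : (fun l : Fin n => if (l : ℕ) = 0 then (1 : ℚ) else 0)
          = (k : ℚ)⁻¹ • ((fun l : Fin n => if (l : ℕ) < k then (1 : ℚ) else 0)
            - ∑ i ∈ Finset.range k, fun l : Fin n =>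
                (if (l : ℕ) = i then (1 : ℚ) else 0) - (if (l : ℕ) = 0 then 1 else 0)) := by
        have hk0 : (k : ℚ) ≠ 0 := by positivity
        funext l
        simp only [Pi.smul_apply, Pi.sub_apply, Finset.sum_apply, Finset.sum_sub_distrib,
          Finset.sum_const, Finset.card_range, smul_eq_mul]
        rw [Finset.sum_ite_eq (Finset.range k) (l : ℕ) (fun _ => (1 : ℚ))]
        by_cases hl : (l : ℕ) = 0
        · rw [if_pos hl, if_pos (Finset.mem_range.mpr (by omega)),
            if_pos (show (l : ℕ) < k by omega)]
          simp
          field_simp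
        · rw [if_neg hl]
          simp only [smul_zero, sub_zero]
          by_cases h2 : (l : ℕ) < k
          · rw [if_pos h2, if_pos (Finset.mem_range.mpr h2)]; ring
          · rw [if_neg h2, if_neg (by simpa [Finset.mem_range] using h2)]; ring
      rw [key]
      exact Submodule.smul_mem _ _ (sub_mem hβq hsum)
    have mem_e : ∀ i : Fin n,
        (fun l : Fin n => if (l : ℕ) = (i : ℕ) then (1 : ℚ) else 0)
          ∈ Submodule.span ℚ (Set.range v) := by
      intro i
      have key : (fun l : Fin n => if (l : ℕ) = (i : ℕ) then (1 : ℚ) else 0)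
          = (fun l : Fin n => (if (l : ℕ) = (i : ℕ) then (1 : ℚ) else 0) -
              (if (l : ℕ) = 0 then 1 else 0))
            + (fun l : Fin n => if (l : ℕ) = 0 then (1 : ℚ) else 0) := by
        funext l; simp
      rw [key]
      exact add_mem (mem_dq (i : ℕ) i.isLt) mem_e0
    have htop : ⊤ ≤ Submodule.span ℚ (Set.range v) := by
      intro x _
      have hx : x = ∑ i : Fin n, x i •
          (fun l : Fin n => if (l : ℕ) = (i : ℕ) then (1 : ℚ) else 0) := by
        funext l
        simp only [Finset.sum_apply, Pi.smul_apply, smul_eq_mul, mul_ite, mul_one, mul_zero]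
        have hcond : ∀ i : Fin n, ((l : ℕ) = (i : ℕ)) = (i = l) := by
          intro i; simp [Fin.ext_iff, eq_comm]
        simp only [hcond]
        rw [Finset.sum_ite_eq' Finset.univ l (fun i => x i)]
        simp
      rw [hx]
      exact Submodule.sum_mem _ fun i _ => Submodule.smul_mem _ _ (mem_e i)
    exact linearIndependent_of_top_le_span_of_card_eq_finrank htop
      (by simp [Module.finrank_pi])
  · intro x
    constructor
    · -- forward: membership gives divisibility, via a linear functional
      intro hx
      let σ : (Fin n → ℤ) →ₗ[ℤ] ℤ :=
        { toFun := fun y => ∑ i, y i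
          map_add' := by intro a b; simp [Finset.sum_add_distrib]
          map_smul' := by intro c a; simp [Finset.mul_sum] }
      have hle : Submodule.span ℤ (Set.range (jknRoot k n)) ≤
          Submodule.comap σ (Ideal.span {(k : ℤ)}) := by
        rw [Submodule.span_le]
        rintro _ ⟨j, rfl⟩
        simp only [Set.mem_preimage, SetLike.mem_coe, Submodule.mem_comap,
          Ideal.mem_span_singleton]
        exact sum_jknRoot k n hkn j
      have := hle hx
      rw [Submodule.mem_comap, Ideal.mem_span_singleton] at this
      exact this
    · -- backward: divisibility gives membership
      rintro ⟨c, hc⟩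
      have key : x = (∑ i : Fin n, x i •
            (fun l : Fin n => (if (l : ℕ) = (i : ℕ) then (1 : ℤ) else 0) -
              (if (l : ℕ) = 0 then 1 else 0)))
          + c • (fun l : Fin n => if (l : ℕ) = 0 then (k : ℤ) else 0) := by
        funext l
        simp only [Pi.add_apply, Finset.sum_apply, Pi.smul_apply, smul_eq_mul,
          mul_sub, Finset.sum_sub_distrib]
        have h1 : (∑ i : Fin n, x i * (if (l : ℕ) = (i : ℕ) then (1 : ℤ) else 0)) = x l := by
          have hcond : ∀ i : Fin n, ((l : ℕ) = (i : ℕ)) = (i = l) := by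
            intro i; simp [Fin.ext_iff, eq_comm]
          simp only [hcond, mul_ite, mul_one, mul_zero]
          rw [Finset.sum_ite_eq' Finset.univ l (fun i => x i)]
          simp
        rw [h1]
        by_cases hl : (l : ℕ) = 0
        · simp only [hl, if_true, mul_one]
          rw [hc]; ring
        · simp [hl]
      rw [key]
      refine add_mem (Submodule.sum_mem _ fun i _ => Submodule.smul_mem _ _
        (mem_d k n hkn (i : ℕ) i.isLt)) (Submodule.smul_mem _ _ (mem_ke0 k n hk hkn))

end GCC
end
end
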